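/- Label the vertices of a convex 2m-gon by Z/2m, and let the Z/2Z action send vertex i to i+m. Let Q be the set of 4-element vertex subsets, Q1 the subset of those contained in a closed half-disk cut out by some diameter (arc from i to i+m), and F the subset of those of the form {i, j, i+m, j+m}. Then |Q1| = (|Q| - |F|)/2, i.e. |Q1| = (binomial(2m,4) - binomial(m,2))/2. -/
import Mathlib


open Finset

/-- Label the vertices of a convex `2m`-gon by `ZMod (2m)`.  The closed half-disk cut out by the
diameter from `i` to `i+m` has vertex set `{i, i+1, …, i+m}`. -/
def halfDisk (m : ℕ) (i : ZMod (2 * m)) : Finset (ZMod (2 * m)) :=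
  (Finset.range (m + 1)).image fun t : ℕ => (i + (t : ZMod (2 * m)))

lemma arith_key (m : ℕ) (hm : 2 ≤ m) :
    (2*m).choose 4 = 4 * (m * m.choose 3) + m.choose 2 := by
  have h4 : Nat.descFactorial (2*m) 4 = 24 * ((2*m).choose 4) := by
    rw [Nat.descFactorial_eq_factorial_mul_choose]; norm_num [Nat.factorial]
  have h3 : Nat.descFactorial m 3 = 6 * m.choose 3 := by
    rw [Nat.descFactorial_eq_factorial_mul_choose]; norm_num [Nat.factorial]
  have h2 : Nat.descFactorial m 2 = 2 * m.choose 2 := by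
    rw [Nat.descFactorial_eq_factorial_mul_choose]; norm_num [Nat.factorial]
  obtain ⟨k, rfl⟩ : ∃ k, m = k + 2 := ⟨m - 2, by omega⟩
  have key : Nat.descFactorial (2*(k+2)) 4
      = 16 * (k+2) * Nat.descFactorial (k+2) 3 + 12 * Nat.descFactorial (k+2) 2 := by
    simp only [Nat.descFactorial_succ, Nat.descFactorial_zero, mul_one, Nat.sub_zero]
    have e1 : 2*(k+2) - 1 = 2*k+3 := by omega
    have e2 : 2*(k+2) - 2 = 2*k+2 := by omega
    have e3 : 2*(k+2) - 3 = 2*k+1 := by omega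
    have e4 : (k+2) - 1 = k+1 := by omega
    have e5 : (k+2) - 2 = k := by omega
    rw [e1, e2, e3, e4, e5]
    ring
  have H : 24 * ((2*(k+2)).choose 4) = 24 * (4 * ((k+2) * (k+2).choose 3) + (k+2).choose 2) := by
    calc 24 * ((2*(k+2)).choose 4) = Nat.descFactorial (2*(k+2)) 4 := h4.symm
      _ = 16 * (k+2) * Nat.descFactorial (k+2) 3 + 12 * Nat.descFactorial (k+2) 2 := key
      _ = 24 * (4 * ((k+2) * (k+2).choose 3) + (k+2).choose 2) := by rw [h3, h2]; ring
  omega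


set_option maxHeartbeats 1600000 in
lemma Fcard (m : ℕ) [NeZero m] (hm : 2 ≤ m) :
    (((Finset.univ : Finset (ZMod (2*m))).powersetCard 4).filter
      fun S => ∃ i j : ZMod (2*m), S = {i, j, i + (m:ZMod (2*m)), j + (m:ZMod (2*m))}).card
      = m.choose 2 := by
  haveI : NeZero (2*m) := ⟨by have := NeZero.ne m; omega⟩
  have hm2 : (0:ℕ) < m := by omega
  have hmm : ((m:ℕ) : ZMod (2*m)) + ((m:ℕ) : ZMod (2*m)) = 0 := by
    rw [← Nat.cast_add]
    have h2m : m + m = 2*m := by ring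
    rw [h2m, ZMod.natCast_self]
  have hMM : ∀ z : ZMod (2*m), z + (m:ZMod (2*m)) + (m:ZMod (2*m)) = z := by
    intro z; rw [add_assoc, hmm, add_zero]
  have hval : ∀ x : ℕ, x < 2*m → ((x : ZMod (2*m))).val = x := fun x hx =>
    ZMod.val_cast_of_lt hx
  have hpc : ((Finset.range m).powersetCard 2).card = m.choose 2 := by
    rw [Finset.card_powersetCard, Finset.card_range]
  rw [← hpc]
  symm
  apply Finset.card_bij (fun (P : Finset ℕ) _ => (P.image fun t : ℕ => (t : ZMod (2*m)))
    ∪ (P.image fun t : ℕ => (t : ZMod (2*m)) + (m : ZMod (2*m))))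
  · -- maps into F
    intro P hP
    rw [Finset.mem_powersetCard] at hP
    obtain ⟨hPsub, hPcard⟩ := hP
    obtain ⟨u, v, huv, rfl⟩ := Finset.card_eq_two.mp hPcard
    have hu : u < m := Finset.mem_range.mp (hPsub (by simp))
    have hv : v < m := Finset.mem_range.mp (hPsub (by simp))
    have hset : ((({u,v} : Finset ℕ).image fun t : ℕ => (t : ZMod (2*m)))
        ∪ (({u,v} : Finset ℕ).image fun t : ℕ => (t : ZMod (2*m)) + (m : ZMod (2*m))))
        = ({u, v, u+m, v+m} : Finset ℕ).image (fun t : ℕ => (t : ZMod (2*m))) := by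
      ext x
      simp only [Finset.mem_union, Finset.mem_image, Finset.mem_insert, Finset.mem_singleton]
      constructor
      · rintro (⟨t, ht, rfl⟩ | ⟨t, ht, rfl⟩)
        · exact ⟨t, by tauto, rfl⟩
        · exact ⟨t+m, by rcases ht with rfl|rfl <;> tauto, by push_cast; ring⟩
      · rintro ⟨t, ht, rfl⟩
        rcases ht with rfl|rfl|rfl|rfl
        · exact Or.inl ⟨t, by simp, rfl⟩
        · exact Or.inl ⟨t, by simp, rfl⟩
        · exact Or.inr ⟨u, by simp, by push_cast; ring⟩
        · exact Or.inr ⟨v, by simp, by push_cast; ring⟩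
    rw [hset]
    rw [Finset.mem_filter, Finset.mem_powersetCard_univ]
    refine ⟨?_, (u:ZMod (2*m)), (v:ZMod (2*m)), ?_⟩
    · -- card = 4
      rw [Finset.card_image_of_injOn]
      · rw [Finset.card_insert_of_notMem (by simp; omega),
          Finset.card_insert_of_notMem (by simp; omega),
          Finset.card_insert_of_notMem (by simp; omega), Finset.card_singleton]
      · intro a ha b hb hab
        simp only [Finset.coe_insert, Set.mem_insert_iff,
          Finset.coe_singleton, Set.mem_singleton_iff] at ha hb
        have ha' : a < 2*m := by rcases ha with rfl|rfl|rfl|rfl <;> omega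
        have hb' : b < 2*m := by rcases hb with rfl|rfl|rfl|rfl <;> omega
        have := congrArg ZMod.val hab
        rwa [hval a ha', hval b hb'] at this
    · -- equals {i,j,i+m,j+m}
      ext x
      simp only [Finset.mem_image, Finset.mem_insert, Finset.mem_singleton]
      constructor
      · rintro ⟨t, (rfl|rfl|rfl|rfl), rfl⟩
        · tauto
        · tauto
        · right; right; left; push_cast; ring
        · right; right; right; push_cast; ring
      · rintro (rfl|rfl|rfl|rfl)
        · exact ⟨u, by tauto, rfl⟩
        · exact ⟨v, by tauto, rfl⟩
        · exact ⟨u+m, by tauto, by push_cast; ring⟩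
        · exact ⟨v+m, by tauto, by push_cast; ring⟩
  · -- injective
    intro P hP P' hP' heq
    have key : ∀ Q : Finset ℕ, Q ∈ (Finset.range m).powersetCard 2 →
        (((Q.image fun t : ℕ => (t : ZMod (2*m))) ∪
          (Q.image fun t : ℕ => (t : ZMod (2*m)) + (m : ZMod (2*m))))).image
          (fun s : ZMod (2*m) => s.val % m) = Q := by
      intro Q hQ
      rw [Finset.mem_powersetCard] at hQ
      ext x
      simp only [Finset.mem_image, Finset.mem_union]
      constructor
      · rintro ⟨s, (⟨t, ht, rfl⟩ | ⟨t, ht, rfl⟩), rfl⟩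
        · have htm : t < m := Finset.mem_range.mp (hQ.1 ht)
          rw [hval t (by omega), Nat.mod_eq_of_lt htm]; exact ht
        · have htm : t < m := Finset.mem_range.mp (hQ.1 ht)
          have hc : (t:ZMod (2*m)) + (m:ZMod (2*m)) = ((t+m : ℕ) : ZMod (2*m)) := by push_cast; ring
          rw [hc, hval (t+m) (by omega), Nat.add_mod_right, Nat.mod_eq_of_lt htm]
          exact ht
      · intro hx
        have hxm : x < m := Finset.mem_range.mp (hQ.1 hx)
        exact ⟨(x : ZMod (2*m)), Or.inl ⟨x, hx, rfl⟩,
          by rw [hval x (by omega), Nat.mod_eq_of_lt hxm]⟩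
    have h1 := key P hP
    rw [heq, key P' hP'] at h1
    exact h1.symm
  · -- surjective
    intro S hS
    rw [Finset.mem_filter, Finset.mem_powersetCard_univ] at hS
    obtain ⟨hScard, i, j, rfl⟩ := hS
    have hdec : ∀ z : ZMod (2*m), ((z.val % m : ℕ) : ZMod (2*m)) = z ∨
        ((z.val % m : ℕ) : ZMod (2*m)) = z + (m:ZMod (2*m)) := by
      intro z
      have hzv : z.val < 2*m := ZMod.val_lt z
      rcases lt_or_ge z.val m with h | h
      · left; rw [Nat.mod_eq_of_lt h, ZMod.natCast_val, ZMod.cast_id]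
      · right
        have hmod : z.val % m + m = z.val := by
          have h1 : z.val % m = (z.val - m) % m := by
            rw [Nat.mod_eq_sub_mod h]
          have h2 : (z.val - m) % m = z.val - m := Nat.mod_eq_of_lt (by omega)
          omega
        have hc := congrArg (fun x : ℕ => ((x : ZMod (2*m)))) hmod
        simp only [Nat.cast_add] at hc
        rw [ZMod.natCast_val, ZMod.cast_id] at hc
        -- hc : ↑(z.val % m) + ↑m = z
        calc ((z.val % m : ℕ) : ZMod (2*m))
            = ((z.val % m : ℕ) : ZMod (2*m)) + (m:ZMod (2*m)) + (m:ZMod (2*m)) := (hMM _).symm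
          _ = z + (m:ZMod (2*m)) := by rw [hc]
    obtain ⟨u, hu⟩ : ∃ u, u = i.val % m := ⟨_, rfl⟩
    obtain ⟨v, hv⟩ : ∃ v, v = j.val % m := ⟨_, rfl⟩
    have hi := hdec i; rw [← hu] at hi
    have hj := hdec j; rw [← hv] at hj
    have hum : u < m := hu ▸ Nat.mod_lt _ hm2
    have hvm : v < m := hv ▸ Nat.mod_lt _ hm2
    have huv : u ≠ v := by
      intro h
      rw [h] at hi
      have hcases : j = i ∨ j = i + (m:ZMod (2*m)) ∨ i = j + (m:ZMod (2*m)) := by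
        rcases hi with hi | hi <;> rcases hj with hj | hj
        · left; rw [← hj]; exact hi
        · right; left
          have h5 : j + (m:ZMod (2*m)) = i := by rw [← hi]; exact hj.symm
          calc j = j + (m:ZMod (2*m)) + (m:ZMod (2*m)) := (hMM j).symm
            _ = i + (m:ZMod (2*m)) := by rw [h5]
        · right; right
          have h5 : i + (m:ZMod (2*m)) = j := by rw [← hj]; exact hi.symm
          calc i = i + (m:ZMod (2*m)) + (m:ZMod (2*m)) := (hMM i).symm
            _ = j + (m:ZMod (2*m)) := by rw [h5]
        · left; exact (add_right_cancel (hi.symm.trans hj)).symm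
      have hc4 : ({i, j, i + (m:ZMod (2*m)), j + (m:ZMod (2*m))} : Finset (ZMod (2*m))).card ≤ 3 := by
        rcases hcases with hc | hc | hc
        · have hsub : ({i, j, i + (m:ZMod (2*m)), j + (m:ZMod (2*m))} : Finset (ZMod (2*m)))
              ⊆ {i, i + (m:ZMod (2*m))} := by
            intro x hx; simp only [Finset.mem_insert, Finset.mem_singleton, hc] at hx ⊢; tauto
          calc _ ≤ ({i, i + (m:ZMod (2*m))} : Finset (ZMod (2*m))).card :=
                Finset.card_le_card hsub
            _ ≤ 2 := (Finset.card_insert_le _ _).trans (by simp)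
            _ ≤ 3 := by omega
        · have hsub : ({i, j, i + (m:ZMod (2*m)), j + (m:ZMod (2*m))} : Finset (ZMod (2*m)))
              ⊆ {i, i + (m:ZMod (2*m))} := by
            intro x hx; simp only [Finset.mem_insert, Finset.mem_singleton, hc, hMM] at hx ⊢; tauto
          calc _ ≤ ({i, i + (m:ZMod (2*m))} : Finset (ZMod (2*m))).card :=
                Finset.card_le_card hsub
            _ ≤ 2 := (Finset.card_insert_le _ _).trans (by simp)
            _ ≤ 3 := by omega
        · have hsub : ({i, j, i + (m:ZMod (2*m)), j + (m:ZMod (2*m))} : Finset (ZMod (2*m)))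
              ⊆ {j, j + (m:ZMod (2*m))} := by
            intro x hx; simp only [Finset.mem_insert, Finset.mem_singleton, hc, hMM] at hx ⊢; tauto
          calc _ ≤ ({j, j + (m:ZMod (2*m))} : Finset (ZMod (2*m))).card :=
                Finset.card_le_card hsub
            _ ≤ 2 := (Finset.card_insert_le _ _).trans (by simp)
            _ ≤ 3 := by omega
      omega
    refine ⟨{u, v}, ?_, ?_⟩
    · rw [Finset.mem_powersetCard]
      constructor
      · intro x hx; simp at hx; rcases hx with rfl | rfl <;> simp [hum, hvm]
      · rw [Finset.card_insert_of_notMem (by simpa using huv), Finset.card_singleton]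
    · have himg : (({u,v} : Finset ℕ).image fun t : ℕ => (t : ZMod (2*m)))
          = {(u:ZMod (2*m)), (v:ZMod (2*m))} := by
        simp [Finset.image_insert]
      have himg2 : (({u,v} : Finset ℕ).image fun t : ℕ => (t : ZMod (2*m)) + (m:ZMod (2*m)))
          = {(u:ZMod (2*m)) + (m:ZMod (2*m)), (v:ZMod (2*m)) + (m:ZMod (2*m))} := by
        simp [Finset.image_insert]
      rw [himg, himg2]
      rcases hi with h1 | h1 <;> rcases hj with h3 | h3 <;> rw [h1, h3] <;> ext x <;>
        simp only [Finset.mem_union, Finset.mem_insert, Finset.mem_singleton, hMM] <;> tauto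

set_option maxHeartbeats 1600000 in
lemma Q1card (m : ℕ) [NeZero m] (hm : 2 ≤ m) :
    (((Finset.univ : Finset (ZMod (2*m))).powersetCard 4).filter
      fun S => ∃ i, S ⊆ halfDisk m i).card = 2 * (m * m.choose 3) := by
  haveI : NeZero (2*m) := ⟨by have := NeZero.ne m; omega⟩
  have hval : ∀ x : ℕ, x < 2*m → ((x : ZMod (2*m))).val = x := fun x hx => ZMod.val_cast_of_lt hx
  have hD : ((Finset.univ : Finset (ZMod (2*m))) ×ˢ ((Finset.Icc m (2*m-1)).powersetCard 3)).card
      = 2 * (m * m.choose 3) := by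
    rw [Finset.card_product, Finset.card_univ, ZMod.card, Finset.card_powersetCard, Nat.card_Icc]
    have h1 : 2*m - 1 + 1 - m = m := by omega
    rw [h1]; ring
  rw [← hD]
  symm
  -- key facts about the map
  have keyA : ∀ (a : ZMod (2*m)) (T : Finset ℕ), T ⊆ Finset.Icc m (2*m-1) →
      ∀ w ∈ insert a (T.image fun t : ℕ => a + (t : ZMod (2*m))), w ≠ a → m ≤ (w - a).val := by
    intro a T hT w hw hwa
    rcases Finset.mem_insert.mp hw with rfl | hw
    · exact absurd rfl hwa
    · obtain ⟨x, hxT, rfl⟩ := Finset.mem_image.mp hw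
      have hx := Finset.mem_Icc.mp (hT hxT)
      have : a + (x : ZMod (2*m)) - a = (x : ZMod (2*m)) := by ring
      rw [this, hval x (by omega)]
      exact hx.1
  have main : ∀ (a : ZMod (2*m)) (T : Finset ℕ), T ⊆ Finset.Icc m (2*m-1) → T.card = 3 →
      ∀ s ∈ insert a (T.image fun t : ℕ => a + (t : ZMod (2*m))), s ≠ a →
      ∃ w ∈ insert a (T.image fun t : ℕ => a + (t : ZMod (2*m))),
        w ≠ s ∧ 1 ≤ (w - s).val ∧ (w - s).val < m := by
    intro a T hT hTcard s hs hsa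
    rcases Finset.mem_insert.mp hs with rfl | hs
    · exact absurd rfl hsa
    obtain ⟨x, hxT, rfl⟩ := Finset.mem_image.mp hs
    have hx := Finset.mem_Icc.mp (hT hxT)
    by_cases hmax : ∀ w ∈ T, w ≤ x
    · -- x is the max; use w = a
      have hx2 : m + 2 ≤ x := by
        have hec : (T.erase x).card = 2 := by rw [Finset.card_erase_of_mem hxT, hTcard]
        have h12 : 1 < (T.erase x).card := by omega
        obtain ⟨u, hu, v, hv, huv⟩ := Finset.one_lt_card.mp h12
        have hu' := Finset.mem_erase.mp hu
        have hv' := Finset.mem_erase.mp hv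
        have hum := Finset.mem_Icc.mp (hT hu'.2)
        have hvm := Finset.mem_Icc.mp (hT hv'.2)
        have h1 : u ≤ x := hmax u hu'.2
        have h2 : v ≤ x := hmax v hv'.2
        omega
      refine ⟨a, Finset.mem_insert_self _ _, ?_, ?_⟩
      · intro h
        have := congrArg (fun z => (z - a).val) h
        simp only [sub_self, ZMod.val_zero] at this
        have heq : (a + (x : ZMod (2*m)) - a) = (x : ZMod (2*m)) := by ring
        rw [heq, hval x (by omega)] at this
        omega
      · have h0 : ((x:ℕ) : ZMod (2*m)) + ((2*m - x : ℕ) : ZMod (2*m)) = 0 := by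
          rw [← Nat.cast_add, show x + (2*m - x) = 2*m by omega, ZMod.natCast_self]
        have heq : a - (a + (x : ZMod (2*m))) = ((2*m - x : ℕ) : ZMod (2*m)) := by
          linear_combination -h0
        rw [heq, hval (2*m - x) (by omega)]
        omega
    · push_neg at hmax
      obtain ⟨w, hwT, hxw⟩ := hmax
      have hw := Finset.mem_Icc.mp (hT hwT)
      refine ⟨a + (w : ZMod (2*m)), Finset.mem_insert_of_mem (Finset.mem_image_of_mem _ hwT),
        ?_, ?_⟩
      · intro h
        have h2 : (w : ZMod (2*m)) = (x : ZMod (2*m)) := by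
          have := h
          rwa [add_right_inj] at this
        have := congrArg ZMod.val h2
        rw [hval w (by omega), hval x (by omega)] at this
        omega
      · have heq : a + (w : ZMod (2*m)) - (a + (x : ZMod (2*m)))
            = ((w - x : ℕ) : ZMod (2*m)) := by
          rw [Nat.cast_sub (le_of_lt hxw)]; ring
        rw [heq, hval (w - x) (by omega)]
        omega
  -- the bijection
  apply Finset.card_bij (fun (p : ZMod (2*m) × Finset ℕ) _ =>
    insert p.1 (p.2.image fun t : ℕ => p.1 + (t : ZMod (2*m))))
  · -- well-defined
    rintro ⟨a, T⟩ hp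
    rw [Finset.mem_product, Finset.mem_powersetCard] at hp
    obtain ⟨-, hT, hTcard⟩ := hp
    simp only at hT hTcard
    have hTne : T.Nonempty := Finset.card_pos.mp (by omega)
    have hnotmem : a ∉ T.image fun t : ℕ => a + (t : ZMod (2*m)) := by
      intro h
      obtain ⟨x, hxT, hx⟩ := Finset.mem_image.mp h
      have hxm := Finset.mem_Icc.mp (hT hxT)
      have h2 : (x : ZMod (2*m)) = 0 := by
        have := hx
        calc (x : ZMod (2*m)) = a + (x : ZMod (2*m)) - a := by ring
          _ = 0 := by rw [this]; ring
      have := congrArg ZMod.val h2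
      rw [hval x (by omega), ZMod.val_zero] at this
      omega
    have hinj : Set.InjOn (fun t : ℕ => a + (t : ZMod (2*m))) T := by
      intro p hp q hq hpq
      simp only at hpq
      have hpm := Finset.mem_Icc.mp (hT hp)
      have hqm := Finset.mem_Icc.mp (hT hq)
      have h2 : (p : ZMod (2*m)) = (q : ZMod (2*m)) := by rwa [add_right_inj] at hpq
      have := congrArg ZMod.val h2
      rwa [hval p (by omega), hval q (by omega)] at this
    rw [Finset.mem_filter, Finset.mem_powersetCard_univ]
    constructor
    · rw [Finset.card_insert_of_notMem hnotmem, Finset.card_image_of_injOn hinj, hTcard]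
    · -- contained in a half-disk
      set x0 := T.min' hTne with hx0
      have hx0T : x0 ∈ T := T.min'_mem hTne
      have hx0m := Finset.mem_Icc.mp (hT hx0T)
      refine ⟨a + (x0 : ZMod (2*m)), ?_⟩
      intro s hs
      rw [halfDisk, Finset.mem_image]
      rcases Finset.mem_insert.mp hs with rfl | hs
      · refine ⟨2*m - x0, Finset.mem_range.mpr (by omega), ?_⟩
        have h0 : ((x0:ℕ) : ZMod (2*m)) + ((2*m - x0 : ℕ) : ZMod (2*m)) = 0 := by
          rw [← Nat.cast_add, show x0 + (2*m - x0) = 2*m by omega, ZMod.natCast_self]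
        linear_combination h0
      · obtain ⟨x, hxT, rfl⟩ := Finset.mem_image.mp hs
        have hxm := Finset.mem_Icc.mp (hT hxT)
        have hx0x : x0 ≤ x := T.min'_le x hxT
        refine ⟨x - x0, Finset.mem_range.mpr (by omega), ?_⟩
        have h0 : ((x0:ℕ) : ZMod (2*m)) + ((x - x0 : ℕ) : ZMod (2*m)) = (x : ZMod (2*m)) := by
          rw [← Nat.cast_add, show x0 + (x - x0) = x by omega]
        linear_combination h0
  · -- injective
    rintro ⟨a, T⟩ hp ⟨b, U⟩ hq heq
    rw [Finset.mem_product, Finset.mem_powersetCard] at hp hq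
    obtain ⟨-, hT, hTcard⟩ := hp
    obtain ⟨-, hU, hUcard⟩ := hq
    simp only at hT hTcard hU hUcard
    simp only at heq
    have hab : a = b := by
      by_contra hne
      have hbmem : b ∈ insert a (T.image fun t : ℕ => a + (t : ZMod (2*m))) := by
        rw [heq]; exact Finset.mem_insert_self _ _
      obtain ⟨w, hw, hws, h1, h2⟩ := main a T hT hTcard b hbmem (Ne.symm hne)
      have hw' : w ∈ insert b (U.image fun t : ℕ => b + (t : ZMod (2*m))) := by rw [← heq]; exact hw
      have := keyA b U hU w hw' (by
        intro h; subst h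
        simp only [sub_self, ZMod.val_zero] at h1
        omega)
      omega
    subst hab
    have hrecover : ∀ (V : Finset ℕ), V ⊆ Finset.Icc m (2*m-1) →
        ((insert a (V.image fun t : ℕ => a + (t : ZMod (2*m)))).erase a).image
          (fun s : ZMod (2*m) => (s - a).val) = V := by
      intro V hV
      have hnm : a ∉ V.image fun t : ℕ => a + (t : ZMod (2*m)) := by
        intro h
        obtain ⟨x, hxV, hx⟩ := Finset.mem_image.mp h
        have hxm := Finset.mem_Icc.mp (hV hxV)
        have h2 : (x : ZMod (2*m)) = 0 := by
          calc (x : ZMod (2*m)) = a + (x : ZMod (2*m)) - a := by ring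
            _ = 0 := by rw [hx]; ring
        have := congrArg ZMod.val h2
        rw [hval x (by omega), ZMod.val_zero] at this
        omega
      rw [Finset.erase_insert hnm, Finset.image_image]
      have : ∀ t ∈ V, ((fun s : ZMod (2*m) => (s - a).val) ∘ (fun t : ℕ => a + (t : ZMod (2*m)))) t = id t := by
        intro t ht
        have htm := Finset.mem_Icc.mp (hV ht)
        simp only [Function.comp, id]
        have heq2 : a + (t : ZMod (2*m)) - a = (t : ZMod (2*m)) := by ring
        rw [heq2, hval t (by omega)]
      rw [Finset.image_congr this, Finset.image_id]
    have hTU : T = U := by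
      have h1 := hrecover T hT
      have h2 := hrecover U hU
      rw [← h1, ← h2, heq]
    rw [hTU]
  · -- surjective
    intro S hS
    rw [Finset.mem_filter, Finset.mem_powersetCard_univ] at hS
    obtain ⟨hScard, i, hsub⟩ := hS
    have hrec : ∀ s : ZMod (2*m), i + (((s - i).val : ℕ) : ZMod (2*m)) = s := by
      intro s; rw [ZMod.natCast_val, ZMod.cast_id]; ring
    set V := S.image (fun s : ZMod (2*m) => (s - i).val) with hV
    have hVcard : V.card = 4 := by
      rw [hV]
      rw [Finset.card_image_of_injOn, hScard]
      intro p hp q hq hpq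
      simp only at hpq
      have := congrArg (fun x : ℕ => i + ((x : ℕ) : ZMod (2*m))) hpq
      simpa only [hrec] using this
    have hVsub : ∀ x ∈ V, x ≤ m := by
      intro x hx
      obtain ⟨s, hsS, rfl⟩ := Finset.mem_image.mp hx
      have := hsub hsS
      rw [halfDisk, Finset.mem_image] at this
      obtain ⟨t, ht, rfl⟩ := this
      have htm : t < m + 1 := Finset.mem_range.mp ht
      have heq2 : i + (t : ZMod (2*m)) - i = (t : ZMod (2*m)) := by ring
      rw [heq2, hval t (by omega)]
      omega
    have hVne : V.Nonempty := Finset.card_pos.mp (by omega)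
    set M := V.max' hVne with hM
    have hMV : M ∈ V := V.max'_mem hVne
    have hMm : M ≤ m := hVsub M hMV
    refine ⟨⟨i + (M : ZMod (2*m)), (V.erase M).image (fun t : ℕ => t + (2*m - M))⟩, ?_, ?_⟩
    · rw [Finset.mem_product, Finset.mem_powersetCard]
      refine ⟨Finset.mem_univ _, ?_, ?_⟩
      · intro x hx
        obtain ⟨t, ht, rfl⟩ := Finset.mem_image.mp hx
        have ht' := Finset.mem_erase.mp ht
        have h1 : t ≤ M := V.le_max' t ht'.2
        have h2 : t < M := lt_of_le_of_ne h1 ht'.1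
        rw [Finset.mem_Icc]
        omega
      · rw [Finset.card_image_of_injOn, Finset.card_erase_of_mem hMV, hVcard]
        intro p hp q hq hpq
        simp only at hpq
        omega
    · -- the image equals S
      have hSimg : S = V.image (fun t : ℕ => i + (t : ZMod (2*m))) := by
        ext x
        simp only [hV, Finset.mem_image]
        constructor
        · intro hx
          exact ⟨(x - i).val, ⟨x, hx, rfl⟩, hrec x⟩
        · rintro ⟨t, ⟨s, hsS, rfl⟩, rfl⟩
          rw [hrec s]; exact hsS
      rw [hSimg]
      ext x
      simp only [Finset.mem_insert, Finset.mem_image]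
      constructor
      · rintro (rfl | ⟨y, hy, rfl⟩)
        · exact ⟨M, hMV, rfl⟩
        · obtain ⟨t, ht, rfl⟩ := hy
          have ht' := Finset.mem_erase.mp ht
          have h1 : t ≤ M := V.le_max' t ht'.2
          refine ⟨t, ht'.2, ?_⟩
          have hcomp : ((M:ℕ) : ZMod (2*m)) + ((t + (2*m - M) : ℕ) : ZMod (2*m))
              = ((t : ℕ) : ZMod (2*m)) := by
            rw [← Nat.cast_add, show M + (t + (2*m - M)) = t + 2*m by omega,
              Nat.cast_add, ZMod.natCast_self, add_zero]
          calc i + (t : ZMod (2*m))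
              = i + (((M:ℕ) : ZMod (2*m)) + ((t + (2*m - M) : ℕ) : ZMod (2*m))) := by rw [hcomp]
            _ = i + ((M:ℕ) : ZMod (2*m)) + ((t + (2*m - M) : ℕ) : ZMod (2*m)) := by ring
      · rintro ⟨t, htV, rfl⟩
        by_cases htM : t = M
        · subst htM; exact Or.inl rfl
        · right
          refine ⟨t + (2*m - M), ⟨t, Finset.mem_erase.mpr ⟨htM, htV⟩, rfl⟩, ?_⟩
          have h1 : t ≤ M := V.le_max' t htV
          have hcomp : ((M:ℕ) : ZMod (2*m)) + ((t + (2*m - M) : ℕ) : ZMod (2*m))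
              = ((t : ℕ) : ZMod (2*m)) := by
            rw [← Nat.cast_add, show M + (t + (2*m - M)) = t + 2*m by omega,
              Nat.cast_add, ZMod.natCast_self, add_zero]
          calc i + ((M:ℕ) : ZMod (2*m)) + ((t + (2*m - M) : ℕ) : ZMod (2*m))
              = i + (((M:ℕ) : ZMod (2*m)) + ((t + (2*m - M) : ℕ) : ZMod (2*m))) := by ring
            _ = i + (t : ZMod (2*m)) := by rw [hcomp]


/-- Let `Q` be the set of 4-element vertex subsets of a `2m`-gon, `Q1` those contained in a
closed half-disk cut out by some diameter, and `F` those of the form `{i, j, i+m, j+m}`.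
Then `|Q1| = (|Q| - |F|)/2 = (C(2m,4) - C(m,2))/2`. -/
theorem half_disk_quadrilateral_count (m : ℕ) [NeZero m] (hm : 2 ≤ m) :
    let Q : Finset (Finset (ZMod (2 * m))) := (Finset.univ : Finset (ZMod (2 * m))).powersetCard 4
    let Q1 : Finset (Finset (ZMod (2 * m))) :=
      Q.filter fun S => ∃ i : ZMod (2 * m), S ⊆ halfDisk m i
    let F : Finset (Finset (ZMod (2 * m))) :=
      Q.filter fun S => ∃ i j : ZMod (2 * m), S = {i, j, i + (m : ZMod (2 * m)), j + (m : ZMod (2 * m))}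
    Q1.card = (Q.card - F.card) / 2 ∧ Q1.card = ((2 * m).choose 4 - m.choose 2) / 2 := by
  intro Q Q1 F
  haveI : NeZero (2 * m) := ⟨by have := NeZero.ne m; omega⟩
  have hQ : Q.card = (2 * m).choose 4 := by
    show ((Finset.univ : Finset (ZMod (2 * m))).powersetCard 4).card = _
    rw [Finset.card_powersetCard, Finset.card_univ, ZMod.card]
  have hF : F.card = m.choose 2 := Fcard m hm
  have hQ1 : Q1.card = 2 * (m * m.choose 3) := Q1card m hm
  have harith := arith_key m hm
  obtain ⟨X, hX⟩ : ∃ X, m * m.choose 3 = X := ⟨_, rfl⟩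
  rw [hX] at hQ1 harith
  refine ⟨?_, ?_⟩
  · rw [hQ1, hQ, hF]; omega
  · rw [hQ1]; omega
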